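/- arXiv:math/0309352 — 2 statements merged into one kernel-verified Lean document; each statement's English description precedes it below -/
import Mathlib

section
/- Let V be a real vector space of finite dimension d ≥ 2 and let h, h' ∈ V* be linearly independent linear forms. Set W := ker h, W' := ker h', and U := W ∩ W' (a subspace of dimension d−2). Then g := h'|_W ∈ W* and g' := h|_{W'} ∈ (W')* are nonzero with kernel U, and the residue maps satisfy the anticommutation identity ψ_g ∘ ψ_h = − ψ_{g'} ∘ ψ_{h'} as linear maps Λ^d V* → Λ^{d−2} U*. -/
open Module

/-- The wedge product `h ∧ η` of a linear form `h ∈ V*` with an alternating `k`-form `η`,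
an alternating `(k+1)`-form. -/
noncomputable def wedgeOne {V : Type*} [AddCommGroup V] [Module ℝ V] {k : ℕ}
    (h : Module.Dual ℝ V) (η : V [⋀^Fin k]→ₗ[ℝ] ℝ) : V [⋀^Fin (k + 1)]→ₗ[ℝ] ℝ :=
  AlternatingMap.domDomCongr (finSumFinEquiv.trans (finCongr (Nat.add_comm 1 k)))
    ((TensorProduct.lid ℝ ℝ).toLinearMap.compAlternatingMap
      (AlternatingMap.domCoprod ((AlternatingMap.ofSubsingleton ℝ V ℝ (0 : Fin 1)) h) η))

/-!
The space of top-degree forms on `V` is a line. Pick `u₀, u₁` with `h u₀ = h' u₁ = 1` and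
`h u₁ = h' u₀ = 0`, extend them by a basis `b` of `U = ker h ∩ ker h'` to a basis
`c = (u₀, u₁, b)` of `V`, and put `θ = det_c (u₀, u₁, ·)`. Evaluating at `c` gives
`h ∧ h' ∧ θ = det_c = -(h' ∧ h ∧ θ)`. Both composite residues send these forms to `θ|_U`,
so they differ by a sign on `det_c`, hence everywhere.
-/

theorem Equiv.Perm.ModSumCongr.mk_eq_one_of_apply_inl {m n : Type*} [Unique m] [Finite n]
    {σ : Equiv.Perm (m ⊕ n)} (hσ : σ (Sum.inl default) = Sum.inl default) :
    (Quotient.mk'' σ : Equiv.Perm.ModSumCongr m n) = Quotient.mk'' 1 := by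
  refine (QuotientGroup.eq (s := (Equiv.Perm.sumCongrHom m n).range)).2 ?_
  rw [mul_one]
  refine inv_mem (Equiv.Perm.mem_sumCongrHom_range_of_perm_mapsTo_inl ?_)
  rintro _ ⟨i, rfl⟩
  exact ⟨default, by rw [Unique.eq_default i, hσ]⟩

section Duality

variable {K V : Type*} [Field K] [AddCommGroup V] [Module K V]

theorem map_subtype_ker_dualMap_subtype (W : Submodule K V) (f : Dual K V) :
    Submodule.map W.subtype (LinearMap.ker (W.subtype.dualMap f)) = W ⊓ LinearMap.ker f :=
  Submodule.map_comap_subtype W (LinearMap.ker f)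

theorem dualMap_subtype_ne_zero {W : Submodule K V} {f : Dual K V} {x : V} (hx : x ∈ W)
    (hfx : f x ≠ 0) : W.subtype.dualMap f ≠ 0 :=
  fun H => hfx (LinearMap.congr_fun H ⟨x, hx⟩)

theorem exists_apply_eq_zero_apply_eq_one {h h' : Dual K V}
    (hli : LinearIndependent K ![h, h']) : ∃ x, h x = 0 ∧ h' x = 1 := by
  by_contra! H
  have hker : LinearMap.ker h ≤ LinearMap.ker h' := fun x hx => by
    by_contra hx'
    refine H ((h' x)⁻¹ • x) ?_ ?_
    · simp [LinearMap.mem_ker.1 hx]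
    · simpa using inv_mul_cancel₀ hx'
  have hspan : h' ∈ Submodule.span K (Set.range fun _ : Unit => h) :=
    mem_span_of_iInf_ker_le_ker (by simpa using hker)
  rw [Set.range_const, Submodule.mem_span_singleton] at hspan
  obtain ⟨a, ha⟩ := hspan
  exact (LinearIndependent.pair_iff' (hli.ne_zero 0)).1 hli a ha

theorem finrank_ker_inf_ker_add_two [FiniteDimensional K V] {h h' : Dual K V} (hh : h ≠ 0)
    (hg : (LinearMap.ker h).subtype.dualMap h' ≠ 0) :
    finrank K (LinearMap.ker h ⊓ LinearMap.ker h' : Submodule K V) + 2 = finrank K V := by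
  rw [← map_subtype_ker_dualMap_subtype, Submodule.finrank_map_subtype_eq,
    ← Module.Dual.finrank_ker_add_one_of_ne_zero hh,
    ← Module.Dual.finrank_ker_add_one_of_ne_zero hg]

theorem LinearIndependent.finCons_of_apply {n : ℕ} {v : Fin n → V} (hv : LinearIndependent K v)
    {f : Dual K V} (hf : ∀ i, f (v i) = 0) {x : V} (hx : f x ≠ 0) :
    LinearIndependent K (Fin.cons x v : Fin (n + 1) → V) :=
  linearIndependent_finCons.2 ⟨hv, fun hmem =>
    hx (Submodule.span_le.2 (Set.range_subset_iff.2 hf : Set.range v ⊆ LinearMap.ker f) hmem)⟩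

theorem exists_basis_cons_cons [FiniteDimensional K V] {e : ℕ} (hdim : finrank K V = e + 2)
    {h h' : Dual K V} {u₀ u₁ : V} (hu₀ : h u₀ ≠ 0) (hu₁ : h u₁ = 0) (hu₁' : h' u₁ ≠ 0) :
    ∃ (c : Basis (Fin (e + 2)) K V) (b : Fin e → V),
      ⇑c = Fin.cons u₀ (Fin.cons u₁ b) ∧ ∀ i, h (b i) = 0 ∧ h' (b i) = 0 := by
  have hU : finrank K (LinearMap.ker h ⊓ LinearMap.ker h' : Submodule K V) = e := by
    have := finrank_ker_inf_ker_add_two (h := h) (h' := h') (fun H => hu₀ (by simp [H]))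
      (dualMap_subtype_ne_zero hu₁ hu₁')
    omega
  let bU := Module.finBasisOfFinrankEq K _ hU
  let b : Fin e → V := Submodule.subtype _ ∘ bU
  have hb (i : Fin e) : h (b i) = 0 ∧ h' (b i) = 0 := (bU i).2
  have hli : LinearIndependent K (Fin.cons u₀ (Fin.cons u₁ b) : Fin (e + 2) → V) :=
    ((bU.linearIndependent.map' _ (Submodule.ker_subtype _)).finCons_of_apply
      (fun i => (hb i).2) hu₁').finCons_of_apply (Fin.cases hu₁ fun i => (hb i).1) hu₀
  exact ⟨basisOfLinearIndependentOfCardEqFinrank hli (by simp [hdim]), b,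
    coe_basisOfLinearIndependentOfCardEqFinrank hli _, hb⟩

end Duality

section Wedge

variable {V : Type*} [AddCommGroup V] [Module ℝ V]

theorem wedgeOne_apply_cons {k : ℕ} (h : Dual ℝ V) (η : V [⋀^Fin k]→ₗ[ℝ] ℝ) (x : V)
    (v : Fin k → V) (hv : ∀ i, h (v i) = 0) :
    wedgeOne h η (Fin.cons x v) = h x * η v := by
  rw [wedgeOne, AlternatingMap.domDomCongr_apply, LinearMap.compAlternatingMap_apply,
    AlternatingMap.domCoprod_apply, sum_apply, map_sum]
  -- only the coset of the identity survives: every other coset feeds some `v j` to `h`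
  refine (Fintype.sum_eq_single (Quotient.mk'' 1) fun q hq => ?_).trans ?_
  · induction q using Quotient.inductionOn' with | h σ => ?_
    obtain ⟨j, hj⟩ : ∃ j, σ (Sum.inl 0) = Sum.inr j := by
      rcases hσ : σ (Sum.inl 0) with i | j
      · exact absurd (Equiv.Perm.ModSumCongr.mk_eq_one_of_apply_inl
          (hσ.trans (congrArg Sum.inl (Subsingleton.elim i 0)))) hq
      · exact ⟨j, rfl⟩
    rw [AlternatingMap.domCoprod.summand_mk'']
    simp [hj, hv]
  · have h0 : Fin.cast (Nat.add_comm 1 k) (Fin.castAdd k (0 : Fin 1)) = 0 := rfl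
    rw [AlternatingMap.domCoprod.summand_mk'']
    simp [h0]

theorem wedgeOne_compLinearMap {W : Type*} [AddCommGroup W] [Module ℝ W] {k : ℕ}
    (h : Dual ℝ V) (η : V [⋀^Fin k]→ₗ[ℝ] ℝ) (f : W →ₗ[ℝ] V) :
    (wedgeOne h η).compLinearMap f = wedgeOne (h ∘ₗ f) (η.compLinearMap f) := by
  ext v
  simp only [wedgeOne, AlternatingMap.compLinearMap_apply, AlternatingMap.domDomCongr_apply,
    LinearMap.compAlternatingMap_apply, AlternatingMap.domCoprod_apply, sum_apply, map_sum]
  refine Finset.sum_congr rfl fun q _ => ?_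
  induction q using Quotient.inductionOn' with | h σ => ?_
  simp [AlternatingMap.domCoprod.summand_mk'']

theorem wedgeOne_wedgeOne_apply_cons_cons {k : ℕ} (h h' : Dual ℝ V) (θ : V [⋀^Fin k]→ₗ[ℝ] ℝ)
    (x y : V) (v : Fin k → V) (hy : h y = 0) (hv : ∀ i, h (v i) = 0 ∧ h' (v i) = 0) :
    wedgeOne h (wedgeOne h' θ) (Fin.cons x (Fin.cons y v)) = h x * (h' y * θ v) := by
  rw [wedgeOne_apply_cons _ _ _ _ (Fin.cases hy fun i => (hv i).1),
    wedgeOne_apply_cons _ _ _ _ fun i => (hv i).2]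

theorem wedgeOne_wedgeOne_apply_cons_cons_eq_neg {k : ℕ} (h h' : Dual ℝ V)
    (θ : V [⋀^Fin k]→ₗ[ℝ] ℝ) (x y : V) (v : Fin k → V) (hx : h' x = 0)
    (hv : ∀ i, h (v i) = 0 ∧ h' (v i) = 0) :
    wedgeOne h' (wedgeOne h θ) (Fin.cons x (Fin.cons y v)) = -(h x * (h' y * θ v)) := by
  have hswap := (wedgeOne h' (wedgeOne h θ)).map_swap (Fin.cons y (Fin.cons x v))
    (zero_ne_one : (0 : Fin (k + 2)) ≠ 1)
  rw [show Fin.cons y (Fin.cons x v) ∘ Equiv.swap 0 1 = (Fin.cons x (Fin.cons y v) : Fin (k + 2) → V)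
    from Matrix.cons_cons_comp_swap_zero_one y x v] at hswap
  rw [hswap, wedgeOne_wedgeOne_apply_cons_cons h' h θ y x v hx fun i => (hv i).symm]
  ring

theorem exists_wedgeOne_wedgeOne_eq_det {k : ℕ} {h h' : Dual ℝ V} {u₀ u₁ : V}
    (hu₀ : h u₀ = 1) (hu₀' : h' u₀ = 0) (hu₁ : h u₁ = 0) (hu₁' : h' u₁ = 1)
    (c : Basis (Fin (k + 2)) ℝ V) {b : Fin k → V} (hc : ⇑c = Fin.cons u₀ (Fin.cons u₁ b))
    (hb : ∀ i, h (b i) = 0 ∧ h' (b i) = 0) :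
    ∃ θ : V [⋀^Fin k]→ₗ[ℝ] ℝ,
      wedgeOne h (wedgeOne h' θ) = c.det ∧ wedgeOne h' (wedgeOne h θ) = -c.det := by
  let θ := (c.det.curryLeft u₀).curryLeft u₁
  have hθ : θ b = 1 := by
    show c.det (Fin.cons u₀ (Fin.cons u₁ b)) = 1
    rw [← hc, c.det_self]
  refine ⟨θ, ?_, ?_⟩
  · rw [AlternatingMap.eq_smul_basis_det c (wedgeOne h (wedgeOne h' θ)), hc,
      wedgeOne_wedgeOne_apply_cons_cons _ _ _ _ _ _ hu₁ hb, hu₀, hu₁', hθ,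
      mul_one, mul_one, one_smul]
  · rw [AlternatingMap.eq_smul_basis_det c (wedgeOne h' (wedgeOne h θ)), hc,
      wedgeOne_wedgeOne_apply_cons_cons_eq_neg _ _ _ _ _ _ hu₀' hb, hu₀, hu₁', hθ,
      mul_one, mul_one]
    exact neg_one_smul ℝ c.det

theorem residue_residue_wedgeOne_wedgeOne {k : ℕ} {W U : Submodule ℝ V} (hUW : U ≤ W)
    (h₁ h₂ : Dual ℝ V)
    (ψ₁ : (V [⋀^Fin (k + 2)]→ₗ[ℝ] ℝ) → (W [⋀^Fin (k + 1)]→ₗ[ℝ] ℝ))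
    (ψ₂ : (W [⋀^Fin (k + 1)]→ₗ[ℝ] ℝ) → (U [⋀^Fin k]→ₗ[ℝ] ℝ))
    (hψ₁ : ∀ η, ψ₁ (wedgeOne h₁ η) = η.compLinearMap W.subtype)
    (hψ₂ : ∀ η, ψ₂ (wedgeOne (W.subtype.dualMap h₂) η) = η.compLinearMap (Submodule.inclusion hUW))
    (θ : V [⋀^Fin k]→ₗ[ℝ] ℝ) :
    ψ₂ (ψ₁ (wedgeOne h₁ (wedgeOne h₂ θ))) = θ.compLinearMap U.subtype := by
  rw [hψ₁, wedgeOne_compLinearMap]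
  exact hψ₂ (θ.compLinearMap W.subtype)

end Wedge

/-- for linearly independent forms `h, h'` on a `(e+2)`-dimensional space,
with `W = ker h`, `W' = ker h'`, `U = W ∩ W'`, the restrictions `g = h'|_W`, `g' = h|_{W'}`
are nonzero with kernel `U`, and the residue maps satisfy `ψ_g ∘ ψ_h = - ψ_{g'} ∘ ψ_{h'}`
as linear maps `Λ^{e+2} V* → Λ^e U*`. -/
theorem stmt2 {V : Type*} [AddCommGroup V] [Module ℝ V] [FiniteDimensional ℝ V]
    (e : ℕ) (hdim : Module.finrank ℝ V = e + 2)
    (h h' : Module.Dual ℝ V) (hindep : LinearIndependent ℝ ![h, h']) :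
    ((LinearMap.ker h).subtype.dualMap h' ≠ 0 ∧
      Submodule.map (LinearMap.ker h).subtype
        (LinearMap.ker ((LinearMap.ker h).subtype.dualMap h')) =
        LinearMap.ker h ⊓ LinearMap.ker h') ∧
    ((LinearMap.ker h').subtype.dualMap h ≠ 0 ∧
      Submodule.map (LinearMap.ker h').subtype
        (LinearMap.ker ((LinearMap.ker h').subtype.dualMap h)) =
        LinearMap.ker h ⊓ LinearMap.ker h') ∧
    (∀ (ψh : (V [⋀^Fin (e + 2)]→ₗ[ℝ] ℝ) →ₗ[ℝ]
          ((LinearMap.ker h) [⋀^Fin (e + 1)]→ₗ[ℝ] ℝ))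
        (ψh' : (V [⋀^Fin (e + 2)]→ₗ[ℝ] ℝ) →ₗ[ℝ]
          ((LinearMap.ker h') [⋀^Fin (e + 1)]→ₗ[ℝ] ℝ))
        (ψg : ((LinearMap.ker h) [⋀^Fin (e + 1)]→ₗ[ℝ] ℝ) →ₗ[ℝ]
          ((LinearMap.ker h ⊓ LinearMap.ker h' : Submodule ℝ V) [⋀^Fin e]→ₗ[ℝ] ℝ))
        (ψg' : ((LinearMap.ker h') [⋀^Fin (e + 1)]→ₗ[ℝ] ℝ) →ₗ[ℝ]
          ((LinearMap.ker h ⊓ LinearMap.ker h' : Submodule ℝ V) [⋀^Fin e]→ₗ[ℝ] ℝ)),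
      (∀ η : V [⋀^Fin (e + 1)]→ₗ[ℝ] ℝ,
        ψh (wedgeOne h η) = η.compLinearMap (LinearMap.ker h).subtype) →
      (∀ η : V [⋀^Fin (e + 1)]→ₗ[ℝ] ℝ,
        ψh' (wedgeOne h' η) = η.compLinearMap (LinearMap.ker h').subtype) →
      (∀ η : (LinearMap.ker h) [⋀^Fin e]→ₗ[ℝ] ℝ,
        ψg (wedgeOne ((LinearMap.ker h).subtype.dualMap h') η) =
          η.compLinearMap (Submodule.inclusion inf_le_left)) →
      (∀ η : (LinearMap.ker h') [⋀^Fin e]→ₗ[ℝ] ℝ,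
        ψg' (wedgeOne ((LinearMap.ker h').subtype.dualMap h) η) =
          η.compLinearMap (Submodule.inclusion inf_le_right)) →
      ψg ∘ₗ ψh = -(ψg' ∘ₗ ψh')) := by
  obtain ⟨u₁, hu₁, hu₁'⟩ := exists_apply_eq_zero_apply_eq_one hindep
  obtain ⟨u₀, hu₀', hu₀⟩ :=
    exists_apply_eq_zero_apply_eq_one (LinearIndependent.pair_symm_iff.1 hindep :
      LinearIndependent ℝ ![h', h])
  refine ⟨⟨dualMap_subtype_ne_zero hu₁ (by simp [hu₁']), map_subtype_ker_dualMap_subtype _ _⟩,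
    ⟨dualMap_subtype_ne_zero hu₀' (by simp [hu₀]),
      (map_subtype_ker_dualMap_subtype _ _).trans (inf_comm ..)⟩, ?_⟩
  intro ψh ψh' ψg ψg' hψh hψh' hψg hψg'
  obtain ⟨c, b, hc, hb⟩ :=
    exists_basis_cons_cons hdim (h' := h') (u₀ := u₀) (by simp [hu₀]) hu₁ (by simp [hu₁'])
  obtain ⟨θ, hω, hω'⟩ := exists_wedgeOne_wedgeOne_eq_det hu₀ hu₀' hu₁ hu₁' c hc hb
  have key : ψg (ψh c.det) = -ψg' (ψh' c.det) := by
    have hdet : c.det = -wedgeOne h' (wedgeOne h θ) := by rw [hω', neg_neg]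
    calc ψg (ψh c.det) = θ.compLinearMap (LinearMap.ker h ⊓ LinearMap.ker h').subtype := by
          rw [← hω]; exact residue_residue_wedgeOne_wedgeOne inf_le_left h h' ψh ψg hψh hψg θ
      _ = -ψg' (ψh' c.det) := by
          rw [hdet, map_neg, map_neg, neg_neg,
            residue_residue_wedgeOne_wedgeOne inf_le_right h' h ψh' ψg' hψh' hψg' θ]
  ext ω : 1
  rw [ω.eq_smul_basis_det c]
  simp [key]
end

section
/- Let V be a real vector space of finite dimension n ≥ 1, let v ∈ V be nonzero with ℓ := span(v), let π : V → V/ℓ be the quotient map, and fix a nonzero real number c. For every hyperplane W ⊆ V with V = W ⊕ ℓ there is a unique linear form g_W ∈ V* with ker g_W = W and g_W(v) = c, and π restricts to a linear isomorphism π|_W : W → V/ℓ. Then the composed linear isomorphism Λ^n V* → Λ^{n−1} W* → Λ^{n−1} (V/ℓ)*, given by ψ_{g_W} followed by the pullback of alternating forms along (π|_W)^{−1}, is independent of the choice of the complementary hyperplane W. -/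
open Module

/-!
Every top-degree form is a wedge product `ω = g ∧ η` with `η = ω(v, ·) / g(v)`, so the residue
is `ψ_g(ω)(w) = ω(v, w) / g(v)` for `w ∈ ker g`. Along a section of `π` this becomes
`z ↦ ω(v, ρ z) / c`, and `ω(v, ·)` only sees its arguments modulo `v`, so the choice of `W`
(hence of `ρ`) drops out.
-/

namespace AlternatingMap

open Equiv TensorProduct

theorem domCoprod_apply_eq_tmul {R M N₁ N₂ ιa ιb : Type*} [CommRing R] [AddCommGroup M]
    [Module R M] [AddCommGroup N₁] [Module R N₁] [AddCommGroup N₂] [Module R N₂]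
    [Fintype ιa] [Fintype ιb] [DecidableEq ιa] [DecidableEq ιb]
    (a : M [⋀^ιa]→ₗ[R] N₁) (b : M [⋀^ιb]→ₗ[R] N₂) (x : ιa ⊕ ιb → M)
    (ha : ∀ σ : Perm (ιa ⊕ ιb), σ ∉ (Perm.sumCongrHom ιa ιb).range →
      a (fun i => x (σ (Sum.inl i))) = 0) :
    a.domCoprod b x = a (x ∘ Sum.inl) ⊗ₜ b (x ∘ Sum.inr) := by
  rw [domCoprod_apply, sum_apply]
  refine (Fintype.sum_eq_single (Quotient.mk'' 1) fun σ hσ => ?_).trans ?_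
  · induction σ using Quotient.inductionOn' with | _ σ
    have hσ' : σ ∉ (Perm.sumCongrHom ιa ιb).range := fun h =>
      hσ (Quotient.sound' (QuotientGroup.leftRel_apply.mpr (by simpa using inv_mem h)))
    simp [domCoprod.summand_mk'', ha σ hσ']
  · simp [domCoprod.summand_mk'', Function.comp_def]

section

variable {R M N : Type*} [CommRing R] [AddCommGroup M] [Module R M] [AddCommGroup N] [Module R N]
  {n : ℕ}

theorem curryLeft_apply_eq_zero_of_mem_span (f : M [⋀^Fin (n + 1)]→ₗ[R] N) (v : M)
    (m : Fin n → M) (j : Fin n) (hj : m j ∈ R ∙ v) : f.curryLeft v m = 0 := by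
  obtain ⟨t, ht⟩ := Submodule.mem_span_singleton.mp hj
  rw [← Function.update_eq_self j m, ← ht, map_update_smul, curryLeft_apply_apply,
    f.map_eq_zero_of_eq _ (i := 0) (j := j.succ) (by simp) (Fin.succ_ne_zero j).symm, smul_zero]

theorem map_cons_eq_of_sub_mem_span (f : M [⋀^Fin (n + 1)]→ₗ[R] N) (v : M) (x y : Fin n → M)
    (h : ∀ j, x j - y j ∈ R ∙ v) : f (Fin.cons v x) = f (Fin.cons v y) := by
  classical
  change f.curryLeft v x = f.curryLeft v y
  rw [← sub_add_cancel x y, map_add_univ, Finset.sum_eq_single ∅ _ (by simp)]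
  · simp
  · intro s _ hs
    obtain ⟨j, hj⟩ := Finset.nonempty_iff_ne_empty.mpr hs
    exact curryLeft_apply_eq_zero_of_mem_span f v _ j (by simpa [hj] using h j)

end

end AlternatingMap

namespace Module.Dual

variable {K V : Type*} [Field K] [AddCommGroup V] [Module K V]

theorem eq_of_le_ker_of_apply_eq {W : Submodule K V} {v : V} (hW : Codisjoint W (K ∙ v))
    {g g' : Module.Dual K V} (hg : W ≤ LinearMap.ker g) (hg' : W ≤ LinearMap.ker g')
    (h : g v = g' v) : g = g' := by
  refine LinearMap.ext_on_codisjoint hW (fun x hx => ?_) (fun x hx => ?_)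
  · rw [LinearMap.mem_ker.mp (hg hx), LinearMap.mem_ker.mp (hg' hx)]
  · obtain ⟨t, rfl⟩ := Submodule.mem_span_singleton.mp hx
    simp [h]

theorem existsUnique_ker_eq_apply_eq {W : Submodule K V} {v : V} (hv : v ≠ 0)
    (hW : IsCompl W (K ∙ v)) {c : K} (hc : c ≠ 0) :
    ∃! g : Module.Dual K V, LinearMap.ker g = W ∧ g v = c := by
  refine existsUnique_of_exists_of_unique
    ⟨c • ((LinearEquiv.coord K V v hv).toLinearMap ∘ₗ (K ∙ v).projectionOnto W hW.symm), ?_, ?_⟩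
    fun g g' ⟨hg, hgv⟩ ⟨hg', hg'v⟩ =>
      eq_of_le_ker_of_apply_eq hW.codisjoint hg.ge hg'.ge (hgv.trans hg'v.symm)
  · rw [LinearMap.ker_smul _ _ hc, LinearEquiv.ker_comp, Submodule.ker_projectionOnto]
  · simp [Submodule.projectionOnto_apply_of_mem_left hW.symm (Submodule.mem_span_singleton_self v),
      LinearEquiv.coord_self]

end Module.Dual

theorem Submodule.mk_apply_eq_of_isCompl {R E : Type*} [Ring R] [AddCommGroup E] [Module R E]
    {p q : Submodule R E} (h : IsCompl p q) (ρ : E ⧸ p → q) (hρ : ∀ x : q, ρ (p.mkQ x) = x)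
    (u : E ⧸ p) : Submodule.Quotient.mk (ρ u : E) = u := by
  have := hρ (p.quotientEquivOfIsCompl q h u)
  rw [Submodule.mkQ_apply, Submodule.mk_quotientEquivOfIsCompl_apply] at this
  rw [this, Submodule.mk_quotientEquivOfIsCompl_apply]

section

variable {V : Type*} [AddCommGroup V] [Module ℝ V]

theorem wedgeOne_cons {k : ℕ} (g : Module.Dual ℝ V) (η : V [⋀^Fin k]→ₗ[ℝ] ℝ) (u : V)
    (w : Fin k → V) (hw : ∀ j, g (w j) = 0) :
    wedgeOne g η (Fin.cons u w) = g u * η w := by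
  classical
  have hinl : Fin.cast (Nat.add_comm 1 k) (Fin.castAdd k (0 : Fin 1)) = 0 := rfl
  rw [wedgeOne, AlternatingMap.domDomCongr_apply, LinearMap.compAlternatingMap_apply,
    AlternatingMap.domCoprod_apply_eq_tmul]
  · simp [Function.comp_def, hinl]
  · intro σ hσ
    obtain ⟨j, hj⟩ : ∃ j, σ (Sum.inl 0) = Sum.inr j := by
      rcases h : σ (Sum.inl 0) with i | j
      · refine absurd (Equiv.Perm.mem_sumCongrHom_range_of_perm_mapsTo_inl ?_) hσ
        rintro _ ⟨i', rfl⟩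
        exact ⟨i, by rw [Subsingleton.elim i' 0, h]⟩
      · exact ⟨j, rfl⟩
    simp [hj, hw]

theorem exists_wedgeOne_eq [FiniteDimensional ℝ V] {e : ℕ} (hdim : Module.finrank ℝ V = e + 1)
    {g : Module.Dual ℝ V} {v : V} (hgv : g v ≠ 0) (ω : V [⋀^Fin (e + 1)]→ₗ[ℝ] ℝ) :
    ∃ η : V [⋀^Fin e]→ₗ[ℝ] ℝ, wedgeOne g η = ω := by
  have hker : Module.finrank ℝ (LinearMap.ker g) = e := by
    have := Module.Dual.finrank_ker_add_one_of_ne_zero (f := g) (by rintro rfl; exact hgv rfl)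
    omega
  let bW := Module.finBasisOfFinrankEq ℝ _ hker
  have hli : ∀ t : ℝ, ∀ x ∈ LinearMap.ker g, t • v + x = 0 → t = 0 := by
    intro t x hx hsum
    simpa [LinearMap.mem_ker.mp hx, hgv] using congrArg g hsum
  have hsp : ∀ z : V, ∃ t : ℝ, z + t • v ∈ LinearMap.ker g :=
    fun z => ⟨-(g z / g v), by simp [hgv]⟩
  let b := Basis.mkFinCons v bW hli hsp
  let η := (g v)⁻¹ • ω.curryLeft v
  have hb : wedgeOne g η b = ω b := by
    rw [Basis.coe_mkFinCons, wedgeOne_cons _ _ _ (Subtype.val ∘ bW) fun j => (bW j).2]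
    simp only [η, AlternatingMap.smul_apply, AlternatingMap.curryLeft_apply_apply, smul_eq_mul]
    exact mul_inv_cancel_left₀ hgv _
  refine ⟨η, ?_⟩
  calc wedgeOne g η = wedgeOne g η b • b.det := AlternatingMap.eq_smul_basis_det b _
    _ = ω b • b.det := by rw [hb]
    _ = ω := (AlternatingMap.eq_smul_basis_det b ω).symm

theorem apply_eq_inv_mul_cons_of_wedgeOne [FiniteDimensional ℝ V] {e : ℕ}
    (hdim : Module.finrank ℝ V = e + 1)
    {g : Module.Dual ℝ V} {v : V} (hgv : g v ≠ 0)
    (ψ : (V [⋀^Fin (e + 1)]→ₗ[ℝ] ℝ) → (LinearMap.ker g [⋀^Fin e]→ₗ[ℝ] ℝ))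
    (hψ : ∀ η : V [⋀^Fin e]→ₗ[ℝ] ℝ, ψ (wedgeOne g η) = η.compLinearMap (LinearMap.ker g).subtype)
    (ω : V [⋀^Fin (e + 1)]→ₗ[ℝ] ℝ) (w : Fin e → LinearMap.ker g) :
    ψ ω w = (g v)⁻¹ * ω (Fin.cons v (Subtype.val ∘ w)) := by
  obtain ⟨η, rfl⟩ := exists_wedgeOne_eq hdim hgv ω
  rw [hψ, wedgeOne_cons _ _ _ (Subtype.val ∘ w) fun j => (w j).2, inv_mul_cancel_left₀ hgv]
  rfl

end

/-- for `ℓ = span v`, `π : V → V/ℓ` and a fixed nonzero `c`, each complementary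
hyperplane `W` gives a unique form `g_W` with kernel `W` and `g_W(v) = c`; `π|_W` is an
isomorphism `W ≅ V/ℓ`, and the composed isomorphism
`Λ^n V* → Λ^{n-1} W* → Λ^{n-1} (V/ℓ)*` (the residue `ψ_{g_W}` followed by pullback along
`(π|_W)⁻¹`) does not depend on `W`.  Here `n = e + 1 ≥ 1`. -/
theorem stmt3 {V : Type*} [AddCommGroup V] [Module ℝ V] [FiniteDimensional ℝ V]
    (e : ℕ) (hdim : Module.finrank ℝ V = e + 1)
    (v : V) (hv : v ≠ 0) (c : ℝ) (hc : c ≠ 0) :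
    (∀ W : Submodule ℝ V, IsCompl W (Submodule.span ℝ {v}) →
      ∃! g : Module.Dual ℝ V, LinearMap.ker g = W ∧ g v = c) ∧
    (∀ W : Submodule ℝ V, IsCompl W (Submodule.span ℝ {v}) →
      Function.Bijective ((Submodule.span ℝ {v}).mkQ ∘ₗ W.subtype)) ∧
    (∀ W₁ W₂ : Submodule ℝ V, IsCompl W₁ (Submodule.span ℝ {v}) →
        IsCompl W₂ (Submodule.span ℝ {v}) →
      ∀ g₁ g₂ : Module.Dual ℝ V,
        LinearMap.ker g₁ = W₁ → g₁ v = c → LinearMap.ker g₂ = W₂ → g₂ v = c →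
      ∀ (ψ₁ : (V [⋀^Fin (e + 1)]→ₗ[ℝ] ℝ) →ₗ[ℝ] (W₁ [⋀^Fin e]→ₗ[ℝ] ℝ))
        (ψ₂ : (V [⋀^Fin (e + 1)]→ₗ[ℝ] ℝ) →ₗ[ℝ] (W₂ [⋀^Fin e]→ₗ[ℝ] ℝ)),
        (∀ η : V [⋀^Fin e]→ₗ[ℝ] ℝ, ψ₁ (wedgeOne g₁ η) = η.compLinearMap W₁.subtype) →
        (∀ η : V [⋀^Fin e]→ₗ[ℝ] ℝ, ψ₂ (wedgeOne g₂ η) = η.compLinearMap W₂.subtype) →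
      ∀ (ρ₁ : (V ⧸ Submodule.span ℝ {v}) →ₗ[ℝ] W₁)
        (ρ₂ : (V ⧸ Submodule.span ℝ {v}) →ₗ[ℝ] W₂),
        (∀ x : W₁, ρ₁ ((Submodule.span ℝ {v}).mkQ x) = x) →
        (∀ x : W₂, ρ₂ ((Submodule.span ℝ {v}).mkQ x) = x) →
      ∀ ω : V [⋀^Fin (e + 1)]→ₗ[ℝ] ℝ,
        (ψ₁ ω).compLinearMap ρ₁ = (ψ₂ ω).compLinearMap ρ₂) := by
  refine ⟨fun W hW => Module.Dual.existsUnique_ker_eq_apply_eq hv hW hc,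
    fun W hW => ((Submodule.span ℝ {v}).quotientEquivOfIsCompl W hW.symm).symm.bijective, ?_⟩
  intro W₁ W₂ hW₁ hW₂ g₁ g₂ hk₁ hv₁ hk₂ hv₂ ψ₁ ψ₂ hψ₁ hψ₂ ρ₁ ρ₂ hρ₁ hρ₂ ω
  subst hk₁ hk₂
  ext z
  rw [AlternatingMap.compLinearMap_apply, AlternatingMap.compLinearMap_apply,
    apply_eq_inv_mul_cons_of_wedgeOne hdim (hv₁ ▸ hc) ψ₁ hψ₁,
    apply_eq_inv_mul_cons_of_wedgeOne hdim (hv₂ ▸ hc) ψ₂ hψ₂, hv₁, hv₂]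
  refine congrArg _ (ω.map_cons_eq_of_sub_mem_span v _ _ fun j => ?_)
  rw [← Submodule.Quotient.eq, Function.comp_apply, Function.comp_apply,
    Submodule.mk_apply_eq_of_isCompl hW₁.symm ρ₁ hρ₁,
    Submodule.mk_apply_eq_of_isCompl hW₂.symm ρ₂ hρ₂]
end
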